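/- Let u₀, u₁ be convex functions on an open convex set P ⊂ ℝⁿ whose Alexandrov Hessians ∇²u₀(y), ∇²u₁(y) are positive definite a.e., and suppose the function t ↦ -∫_P log det(∇²((1-t)u₀ + t u₁)(y)) dy is affine on [0,1] with finite values. Then ∇²u₀ = ∇²u₁ almost everywhere on P. -/

import Mathlib

/-!
`log det` is strictly concave on positive definite matrices: conjugating by `A^{-1/2}` reduces
`(1-t) log det A + t log det B < log det ((1-t)A + tB)` to the case `A = 1`, where it is strict
concavity of `log` applied to the eigenvalues of `B`. So at `t = 1/2` the integrand lies a.e.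
above its chord; affineness makes the two integrals equal, hence the integrands agree a.e., and
strict concavity then forces `H₀ = H₁` there.
-/

open MeasureTheory Filter Topology
open scoped RealInnerProductSpace

/-- `u` has a second-order (Alexandrov) Taylor expansion at `y` with subgradient `g` and
Hessian matrix `H`. -/
def HasAlexandrovHessianAt {n : ℕ} (u : EuclideanSpace ℝ (Fin n) → ℝ)
    (g : EuclideanSpace ℝ (Fin n)) (H : Matrix (Fin n) (Fin n) ℝ)
    (y : EuclideanSpace ℝ (Fin n)) : Prop :=
  Filter.Tendsto (fun h : EuclideanSpace ℝ (Fin n) =>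
      (u (y + h) - u y - ⟪g, h⟫ - (∑ i, ∑ j, H i j * h i * h j) / 2) / ‖h‖ ^ 2)
    (𝓝[≠] 0) (𝓝 0)

open Real

namespace Matrix

variable {n 𝕜 : Type*}

lemma convex_setOf_posDef : Convex ℝ {A : Matrix n n ℝ | A.PosDef} :=
  convex_iff_forall_pos.2 fun _ hA _ hB _ _ ha hb _ => (hA.smul ha).add (hB.smul hb)

variable [Fintype n] [DecidableEq n] [RCLike 𝕜]

lemma IsHermitian.det_cfc {A : Matrix n n 𝕜} (hA : A.IsHermitian) (f : ℝ → ℝ) :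
    (cfc f A).det = ∏ i, (f (hA.eigenvalues i) : 𝕜) := by
  rw [hA.cfc_eq]
  simp [IsHermitian.cfc, -Unitary.conjStarAlgAut_apply]

lemma IsHermitian.eq_one_of_eigenvalues_eq_one {A : Matrix n n 𝕜} (hA : A.IsHermitian)
    (h : ∀ i, hA.eigenvalues i = 1) : A = 1 := by
  have hspec : (spectrum ℝ A).EqOn id (fun _ => 1) := by
    rw [hA.spectrum_real_eq_range_eigenvalues]
    rintro - ⟨i, rfl⟩
    exact h i
  rw [← cfc_id ℝ A hA.isSelfAdjoint, cfc_congr hspec, cfc_const 1 A hA.isSelfAdjoint, map_one]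

lemma IsHermitian.smul_one_add_smul_eq_cfc {M : Matrix n n ℝ} (hM : M.IsHermitian) (a b : ℝ) :
    a • 1 + b • M = cfc (fun x => a + b * x) M := by
  rw [cfc_const_add (R := ℝ) (r := a) (f := (b * ·)) (a := M) (hf := by fun_prop)
    (ha := hM.isSelfAdjoint), cfc_const_mul_id b M hM.isSelfAdjoint,
    Algebra.algebraMap_eq_smul_one]

lemma PosDef.mul_log_det_lt_log_det_smul_one_add_smul {M : Matrix n n ℝ} (hM : M.PosDef)
    (hM1 : M ≠ 1) {a b : ℝ} (ha : 0 < a) (hb : 0 < b) (hab : a + b = 1) :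
    b * log M.det < log (a • 1 + b • M).det := by
  set μ := hM.1.eigenvalues
  have hμ : ∀ i, 0 < μ i := hM.eigenvalues_pos
  have hle : ∀ i ∈ Finset.univ, b * log (μ i) ≤ log (a + b * μ i) := fun i _ => by
    simpa using strictConcaveOn_log_Ioi.concaveOn.2 (Set.mem_Ioi.2 one_pos)
      (Set.mem_Ioi.2 (hμ i)) ha.le hb.le hab
  obtain ⟨i, hi⟩ : ∃ i, μ i ≠ 1 := by
    by_contra! h
    exact hM1 (hM.1.eq_one_of_eigenvalues_eq_one h)
  have hlt : b * log (μ i) < log (a + b * μ i) := by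
    simpa using strictConcaveOn_log_Ioi.2 (Set.mem_Ioi.2 one_pos) (Set.mem_Ioi.2 (hμ i))
      hi.symm ha hb hab
  rw [hM.1.smul_one_add_smul_eq_cfc, hM.1.det_cfc, hM.1.det_eq_prod_eigenvalues]
  simp only [RCLike.ofReal_real_eq_id, id_eq]
  rw [log_prod (fun i _ => (hμ i).ne'), log_prod (fun i _ => (add_pos ha (mul_pos hb (hμ i))).ne'),
    Finset.mul_sum]
  exact Finset.sum_lt_sum hle ⟨i, Finset.mem_univ i, hlt⟩

open scoped MatrixOrder in
theorem strictConcaveOn_log_det :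
    StrictConcaveOn ℝ {A : Matrix n n ℝ | A.PosDef} (fun A => log A.det) := by
  refine ⟨convex_setOf_posDef, fun A (hA : A.PosDef) B (hB : B.PosDef) hAB a b ha hb hab => ?_⟩
  set S := CFC.sqrt A
  have hS : S.PosDef := IsStrictlyPositive.posDef (IsStrictlyPositive.sqrt A hA.isStrictlyPositive)
  have hSS : S * S = A := CFC.sqrt_mul_sqrt_self A hA.posSemidef.nonneg
  set M := S⁻¹ * B * S⁻¹
  have hM : M.PosDef := by
    have := (IsUnit.posDef_star_left_conjugate_iff hS.inv.isUnit).2 hB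
    rwa [star_eq_conjTranspose, hS.inv.1.eq] at this
  have hdet : IsUnit S.det := hS.det_pos.ne'.isUnit
  have hBM : B = S * M * S := by
    simp only [M, ← mul_assoc, mul_nonsing_inv _ hdet]
    rw [one_mul, mul_assoc, nonsing_inv_mul _ hdet, mul_one]
  have hM1 : M ≠ 1 := fun h => hAB (by rw [hBM, h, mul_one, hSS])
  have hconj : ∀ X : Matrix n n ℝ, X.PosDef → log (S * X * S).det = log A.det + log X.det :=
    fun X hX => by
      rw [det_mul, det_mul, mul_right_comm, ← det_mul, hSS,
        log_mul hA.det_pos.ne' hX.det_pos.ne']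
  have hmid : a • A + b • B = S * (a • 1 + b • M) * S := by
    rw [mul_add, add_mul, Matrix.mul_smul, Matrix.smul_mul, mul_one, hSS, Matrix.mul_smul,
      Matrix.smul_mul, ← hBM]
  have hpos : (a • 1 + b • M).PosDef := (PosDef.one.smul ha).add (hM.smul hb)
  have hsum : a * log A.det + b * log A.det = log A.det := by rw [← add_mul, hab, one_mul]
  have hM_gap := hM.mul_log_det_lt_log_det_smul_one_add_smul hM1 ha hb hab
  simp only [smul_eq_mul]
  rw [hmid, hconj _ hpos, hBM, hconj _ hM]
  linarith

end Matrix

lemma StrictConcaveOn.ae_eq_of_integral_comp_combo_eq {α E : Type*} [MeasurableSpace α]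
    {μ : Measure α} [AddCommGroup E] [Module ℝ E] {s : Set E} {φ : E → ℝ}
    (hφ : StrictConcaveOn ℝ s φ) {F₀ F₁ : α → E} (hF₀ : ∀ᵐ x ∂μ, F₀ x ∈ s)
    (hF₁ : ∀ᵐ x ∂μ, F₁ x ∈ s) {a b : ℝ} (ha : 0 < a) (hb : 0 < b) (hab : a + b = 1)
    (hi₀ : Integrable (fun x => φ (F₀ x)) μ) (hi₁ : Integrable (fun x => φ (F₁ x)) μ)
    (hi : Integrable (fun x => φ (a • F₀ x + b • F₁ x)) μ)
    (h : ∫ x, φ (a • F₀ x + b • F₁ x) ∂μ = a * ∫ x, φ (F₀ x) ∂μ + b * ∫ x, φ (F₁ x) ∂μ) :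
    F₀ =ᵐ[μ] F₁ := by
  have hchord_le : (fun x => a * φ (F₀ x) + b * φ (F₁ x)) ≤ᵐ[μ]
      fun x => φ (a • F₀ x + b • F₁ x) := by
    filter_upwards [hF₀, hF₁] with x hx₀ hx₁
    exact hφ.concaveOn.2 hx₀ hx₁ ha.le hb.le hab
  have hchord_int : Integrable (fun x => a * φ (F₀ x) + b * φ (F₁ x)) μ :=
    (hi₀.const_mul a).add (hi₁.const_mul b)
  have hchord_eq := (integral_eq_iff_of_ae_le hchord_int hi hchord_le).1 <| by
    rw [integral_add (hi₀.const_mul a) (hi₁.const_mul b), integral_const_mul, integral_const_mul,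
      h]
  filter_upwards [hchord_eq, hF₀, hF₁] with x hx hx₀ hx₁
  by_contra hne
  exact (hφ.2 hx₀ hx₁ hne ha hb hab).ne hx

theorem hessians_eq_of_affine_logDet_integral_general {n : ℕ}
    (P : Set (EuclideanSpace ℝ (Fin n)))
    (u₀ u₁ : EuclideanSpace ℝ (Fin n) → ℝ)
    (H₀ H₁ : EuclideanSpace ℝ (Fin n) → Matrix (Fin n) (Fin n) ℝ)
    (hH₀ : ∀ᵐ y ∂(volume.restrict P),
      (H₀ y).PosDef ∧ ∃ g₀, HasAlexandrovHessianAt u₀ g₀ (H₀ y) y)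
    (hH₁ : ∀ᵐ y ∂(volume.restrict P),
      (H₁ y).PosDef ∧ ∃ g₁, HasAlexandrovHessianAt u₁ g₁ (H₁ y) y)
    -- finite values:
    (hint : ∀ t ∈ Set.Icc (0:ℝ) 1,
      IntegrableOn (fun y => Real.log (((1 - t) • H₀ y + t • H₁ y).det)) P)
    -- affineness of `t ↦ -∫_P log det((1-t)H₀ + tH₁)` on `[0,1]`:
    (haff : ∀ t ∈ Set.Icc (0:ℝ) 1,
      -∫ y in P, Real.log (((1 - t) • H₀ y + t • H₁ y).det)
        = (1 - t) * (-∫ y in P, Real.log ((H₀ y).det))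
          + t * (-∫ y in P, Real.log ((H₁ y).det))) :
    ∀ᵐ y ∂(volume.restrict P), H₀ y = H₁ y := by
  have ht : (2⁻¹ : ℝ) ∈ Set.Icc (0 : ℝ) 1 := by norm_num
  refine Matrix.strictConcaveOn_log_det.ae_eq_of_integral_comp_combo_eq
    (hH₀.mono fun y hy => hy.1) (hH₁.mono fun y hy => hy.1)
    (by norm_num : (0 : ℝ) < 1 - 2⁻¹) (by norm_num : (0 : ℝ) < 2⁻¹) (by norm_num)
    (by simpa [IntegrableOn] using hint 0 (by norm_num))
    (by simpa [IntegrableOn] using hint 1 (by norm_num)) (hint _ ht) ?_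
  linarith [haff _ ht]

/-- If `u₀, u₁` are convex on an open convex `P ⊆ ℝⁿ` with a.e. positive definite Alexandrov
Hessians `H₀, H₁`, and `t ↦ -∫_P log det((1-t)H₀ + tH₁) dy` is affine on `[0,1]` with finite
values, then `H₀ = H₁` a.e. on `P`. -/
theorem hessians_eq_of_affine_logDet_integral {n : ℕ}
    (P : Set (EuclideanSpace ℝ (Fin n))) (hP : IsOpen P) (hPc : Convex ℝ P)
    (u₀ u₁ : EuclideanSpace ℝ (Fin n) → ℝ)
    (h₀ : ConvexOn ℝ P u₀) (h₁ : ConvexOn ℝ P u₁)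
    (H₀ H₁ : EuclideanSpace ℝ (Fin n) → Matrix (Fin n) (Fin n) ℝ)
    (hH₀ : ∀ᵐ y ∂(volume.restrict P),
      (H₀ y).PosDef ∧ ∃ g₀, HasAlexandrovHessianAt u₀ g₀ (H₀ y) y)
    (hH₁ : ∀ᵐ y ∂(volume.restrict P),
      (H₁ y).PosDef ∧ ∃ g₁, HasAlexandrovHessianAt u₁ g₁ (H₁ y) y)
    -- finite values:
    (hint : ∀ t ∈ Set.Icc (0:ℝ) 1,
      IntegrableOn (fun y => Real.log (((1 - t) • H₀ y + t • H₁ y).det)) P)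
    -- affineness of `t ↦ -∫_P log det((1-t)H₀ + tH₁)` on `[0,1]`:
    (haff : ∀ t ∈ Set.Icc (0:ℝ) 1,
      -∫ y in P, Real.log (((1 - t) • H₀ y + t • H₁ y).det)
        = (1 - t) * (-∫ y in P, Real.log ((H₀ y).det))
          + t * (-∫ y in P, Real.log ((H₁ y).det))) :
    ∀ᵐ y ∂(volume.restrict P), H₀ y = H₁ y :=
  hessians_eq_of_affine_logDet_integral_general P u₀ u₁ H₀ H₁ hH₀ hH₁ hint haff
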